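/- (Proposition on Marcinkiewicz–Zygmund type SLLN) Let p > 1, set r = min{p, 2}, and let (ξ_n)_{n≥1} be a sequence of real random variables with sup_{n≥1} τ_{φ_p}(ξ_n) < ∞. Suppose that for every natural number n, τ_{φ_p}(∑_{i=1}^n ξ_i)^r ≤ ∑_{i=1}^n τ_{φ_p}(ξ_i)^r. Then for every s with 0 < s < r, n^{−1/s} ∑_{i=1}^n ξ_i converges to 0 almost surely as n → ∞. -/

import Mathlib

/-!
Chernoff's bound at `λ = 1/a` for any `a > τ_{φ_p}(S_n)` gives
`P(|S_n| ≥ t) ≤ 2 exp(φ_p(1) - t/a) = 2 exp(1/2 - t/a)`. The hypothesis on the standards bounds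
`τ_{φ_p}(S_n)` by `b n^{1/r}`, where `b = sup_n τ_{φ_p}(ξ_n)`, so taking `a = (b + 1) n^{1/r}`
and `t = ε n^{1/s}`, the probabilities `P(|S_n| ≥ ε n^{1/s})` are at most
`2 exp(1/2 - ε n^{1/s - 1/r} / (b + 1))`. Since `s < r` these are summable, and Borel–Cantelli
gives `n^{-1/s} S_n → 0` almost surely.
-/

open MeasureTheory Real Filter

/-- The quadratic `N`-function `φ_p`: `φ_p(x) = x²/2` for `|x| ≤ 1` and
`φ_p(x) = (1/p)|x|^p - 1/p + 1/2` for `|x| > 1`. -/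
noncomputable def phi (p : ℝ) (x : ℝ) : ℝ :=
  if |x| ≤ 1 then x ^ 2 / 2 else (1 / p) * |x| ^ p - 1 / p + 1 / 2

/-- The set of admissible constants in the definition of the `φ`-subgaussian standard:
`{a ≥ 0 : ∀ λ, ln E exp(λξ) ≤ φ(aλ)}` (the exponentiated form of the inequality also
encodes finiteness of `E exp(λξ)`). -/
def subSet {Ω : Type*} [MeasurableSpace Ω] (μ : Measure Ω) (φ : ℝ → ℝ) (ξ : Ω → ℝ) :
    Set ℝ :=
  {a | 0 ≤ a ∧ ∀ l : ℝ,
    ∫⁻ ω, ENNReal.ofReal (Real.exp (l * ξ ω)) ∂μ ≤ ENNReal.ofReal (Real.exp (φ (a * l)))}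

/-- The `φ`-subgaussian standard (norm) `τ_φ(ξ)`. -/
noncomputable def tau {Ω : Type*} [MeasurableSpace Ω] (μ : Measure Ω) (φ : ℝ → ℝ)
    (ξ : Ω → ℝ) : ℝ :=
  sInf (subSet μ φ ξ)

lemma phi_neg (p x : ℝ) : phi p (-x) = phi p x := by
  simp only [phi, abs_neg, neg_sq]

lemma phi_one (p : ℝ) : phi p 1 = 1 / 2 := by norm_num [phi]

lemma phi_le_phi_of_abs_le {p : ℝ} (hp : 0 < p) {x y : ℝ} (h : |x| ≤ |y|) :
    phi p x ≤ phi p y := by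
  have hx2 : x ^ 2 ≤ y ^ 2 := sq_le_sq.2 h
  have hp' : 0 < 1 / p := by positivity
  unfold phi
  split_ifs with hx hy hy
  · linarith
  · have h1 : 1 ≤ |y| ^ p := one_le_rpow (by linarith) hp.le
    have h2 : x ^ 2 ≤ 1 := by nlinarith [sq_abs x, abs_nonneg x]
    nlinarith
  · linarith
  · have : |x| ^ p ≤ |y| ^ p := rpow_le_rpow (abs_nonneg x) h hp.le
    nlinarith

section Subgaussian

variable {Ω : Type*} [MeasurableSpace Ω] {μ : Measure Ω} {φ : ℝ → ℝ} {ξ : Ω → ℝ} {a : ℝ}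

lemma tau_nonneg : 0 ≤ tau μ φ ξ :=
  sInf_nonneg fun _ ha => ha.1

lemma mem_subSet_phi_of_le {p : ℝ} (hp : 0 < p) (ha : a ∈ subSet μ (phi p) ξ) {a' : ℝ}
    (h : a ≤ a') : a' ∈ subSet μ (phi p) ξ := by
  refine ⟨ha.1.trans h, fun l => (ha.2 l).trans ?_⟩
  refine ENNReal.ofReal_le_ofReal (exp_le_exp.2 (phi_le_phi_of_abs_le hp ?_))
  rw [abs_mul, abs_mul, abs_of_nonneg ha.1, abs_of_nonneg (ha.1.trans h)]
  exact mul_le_mul_of_nonneg_right h (abs_nonneg l)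

lemma mem_subSet_phi_of_tau_lt {p : ℝ} (hp : 0 < p) (hne : (subSet μ (phi p) ξ).Nonempty)
    (ha : tau μ (phi p) ξ < a) : a ∈ subSet μ (phi p) ξ := by
  obtain ⟨a₀, ha₀, ha₀a⟩ := exists_lt_of_csInf_lt hne ha
  exact mem_subSet_phi_of_le hp ha₀ ha₀a.le

lemma mem_subSet_neg (hφ : ∀ x, φ (-x) = φ x) (ha : a ∈ subSet μ φ ξ) :
    a ∈ subSet μ φ (-ξ) := by
  refine ⟨ha.1, fun l => ?_⟩
  simpa only [Pi.neg_apply, mul_neg, neg_mul, hφ] using ha.2 (-l)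

lemma measure_ge_le_of_mem_subSet (hξ : Measurable ξ) (ha : a ∈ subSet μ φ ξ) {l : ℝ}
    (hl : 0 ≤ l) (t : ℝ) :
    μ {ω | t ≤ ξ ω} ≤ ENNReal.ofReal (exp (φ (a * l) - l * t)) := by
  have hexp : AEMeasurable (fun ω => ENNReal.ofReal (exp (l * ξ ω))) μ :=
    (measurable_exp.comp (hξ.const_mul l)).ennreal_ofReal.aemeasurable
  have hmarkov : ENNReal.ofReal (exp (l * t)) * μ {ω | t ≤ ξ ω} ≤
      ENNReal.ofReal (exp (φ (a * l))) := by
    refine le_trans ?_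
      ((mul_meas_ge_le_lintegral₀ hexp (ENNReal.ofReal (exp (l * t)))).trans (ha.2 l))
    refine mul_le_mul_right (measure_mono fun ω hω => ?_) _
    exact ENNReal.ofReal_le_ofReal (exp_le_exp.2 (mul_le_mul_of_nonneg_left hω hl))
  rw [exp_sub, ENNReal.ofReal_div_of_pos (exp_pos _), ENNReal.le_div_iff_mul_le
    (Or.inl (ENNReal.ofReal_pos.2 (exp_pos _)).ne') (Or.inl ENNReal.ofReal_ne_top), mul_comm]
  exact hmarkov

lemma measure_abs_ge_le_of_mem_subSet (hφ : ∀ x, φ (-x) = φ x) (hξ : Measurable ξ)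
    (ha : a ∈ subSet μ φ ξ) {l : ℝ} (hl : 0 ≤ l) (t : ℝ) :
    μ {ω | t ≤ |ξ ω|} ≤ ENNReal.ofReal (2 * exp (φ (a * l) - l * t)) := by
  have hsplit : {ω | t ≤ |ξ ω|} = {ω | t ≤ ξ ω} ∪ {ω | t ≤ (-ξ) ω} := by
    ext ω
    simp only [Set.mem_union, Set.mem_ofPred_eq, Pi.neg_apply, le_abs]
  calc μ {ω | t ≤ |ξ ω|}
      ≤ μ {ω | t ≤ ξ ω} + μ {ω | t ≤ (-ξ) ω} := hsplit ▸ measure_union_le _ _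
    _ ≤ ENNReal.ofReal (exp (φ (a * l) - l * t)) + ENNReal.ofReal (exp (φ (a * l) - l * t)) :=
        add_le_add (measure_ge_le_of_mem_subSet hξ ha hl t)
          (measure_ge_le_of_mem_subSet hξ.neg (mem_subSet_neg hφ ha) hl t)
    _ = ENNReal.ofReal (2 * exp (φ (a * l) - l * t)) := by
        rw [two_mul, ENNReal.ofReal_add (exp_nonneg _) (exp_nonneg _)]

lemma measure_abs_ge_le_of_tau_lt {p : ℝ} (hp : 0 < p) (hξ : Measurable ξ)
    (hne : (subSet μ (phi p) ξ).Nonempty) (ha : tau μ (phi p) ξ < a) (t : ℝ) :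
    μ {ω | t ≤ |ξ ω|} ≤ ENNReal.ofReal (2 * exp (1 / 2 - t / a)) := by
  have ha0 : 0 < a := tau_nonneg.trans_lt ha
  have := measure_abs_ge_le_of_mem_subSet (phi_neg p) hξ (mem_subSet_phi_of_tau_lt hp hne ha)
    (inv_nonneg.2 ha0.le) t
  rwa [mul_inv_cancel₀ ha0.ne', phi_one, inv_mul_eq_div] at this

end Subgaussian

lemma le_mul_card_rpow_inv_of_rpow_le_sum {ι : Type*} {s : Finset ι} {y : ι → ℝ} {x b r : ℝ}
    (hx : 0 ≤ x) (hb : 0 ≤ b) (hr : 0 < r) (hy : ∀ i ∈ s, 0 ≤ y i ∧ y i ≤ b)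
    (h : x ^ r ≤ ∑ i ∈ s, y i ^ r) : x ≤ b * (s.card : ℝ) ^ r⁻¹ := by
  rw [← rpow_le_rpow_iff hx (by positivity) hr, mul_rpow hb (by positivity),
    rpow_inv_rpow (by positivity) hr.ne']
  calc x ^ r ≤ ∑ i ∈ s, y i ^ r := h
    _ ≤ s.card • b ^ r :=
        Finset.sum_le_card_nsmul _ _ _ fun i hi => rpow_le_rpow (hy i hi).1 (hy i hi).2 hr.le
    _ = b ^ r * s.card := by rw [nsmul_eq_mul, mul_comm]

lemma summable_exp_neg_mul_rpow {c d : ℝ} (hc : 0 < c) (hd : 0 < d) :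
    Summable fun n : ℕ => exp (-c * (n : ℝ) ^ d) := by
  have hlim : Tendsto (fun n : ℕ => (n : ℝ) ^ d) atTop atTop :=
    (tendsto_rpow_atTop hd).comp tendsto_natCast_atTop_atTop
  have hlittle := (isLittleO_exp_neg_mul_rpow_atTop hc (-2 / d)).comp_tendsto hlim
  refine summable_of_isBigO_nat (summable_nat_rpow.2 (by norm_num : (-2 : ℝ) < -1))
    (hlittle.isBigO.congr_right fun n => ?_)
  rw [Function.comp_apply, ← rpow_mul (Nat.cast_nonneg n), mul_div_cancel₀ _ hd.ne']

lemma ae_tendsto_zero_of_tsum_measure_abs_ge_ne_top {Ω : Type*} [MeasurableSpace Ω]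
    {μ : Measure Ω} {X : ℕ → Ω → ℝ} (h : ∀ ε > 0, ∑' n, μ {ω | ε ≤ |X n ω|} ≠ ⊤) :
    ∀ᵐ ω ∂μ, Tendsto (fun n => X n ω) atTop (nhds 0) := by
  have hBC : ∀ᵐ ω ∂μ, ∀ k : ℕ, ∀ᶠ n in atTop, ω ∉ {ω | 1 / ((k : ℝ) + 1) ≤ |X n ω|} :=
    ae_all_iff.2 fun k => ae_eventually_notMem (h _ Nat.one_div_pos_of_nat)
  filter_upwards [hBC] with ω hω
  rw [NormedAddGroup.tendsto_nhds_zero]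
  intro ε hε
  obtain ⟨k, hk⟩ := exists_nat_one_div_lt hε
  filter_upwards [hω k] with n hn
  exact (not_le.1 hn).trans hk

lemma measure_rpow_mul_abs_ge_le {Ω : Type*} [MeasurableSpace Ω] {μ : Measure Ω} {p : ℝ}
    (hp : 0 < p) {S : Ω → ℝ} (hS : Measurable S) (hne : (subSet μ (phi p) S).Nonempty)
    {x b r s ε : ℝ} (hx : 0 < x) (hb : 0 ≤ b) (hτ : tau μ (phi p) S ≤ b * x ^ (1 / r)) :
    μ {ω | ε ≤ |x ^ (-(1 / s)) * S ω|} ≤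
      ENNReal.ofReal (2 * exp (1 / 2) * exp (-(ε / (b + 1)) * x ^ (1 / s - 1 / r))) := by
  have hset : {ω | ε ≤ |x ^ (-(1 / s)) * S ω|} = {ω | ε * x ^ (1 / s) ≤ |S ω|} := by
    ext ω
    rw [Set.mem_ofPred_eq, Set.mem_ofPred_eq, abs_mul, abs_of_pos (rpow_pos_of_pos hx _),
      rpow_neg hx.le, le_inv_mul_iff₀ (rpow_pos_of_pos hx _), mul_comm]
  have hτa : tau μ (phi p) S < (b + 1) * x ^ (1 / r) := by
    have := rpow_pos_of_pos hx (1 / r)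
    nlinarith
  rw [hset]
  refine (measure_abs_ge_le_of_tau_lt hp hS hne hτa _).trans_eq ?_
  rw [sub_eq_add_neg, exp_add, ← mul_assoc, rpow_sub hx]
  congr 4
  field_simp

theorem marcinkiewicz_zygmund_slln_general
    {Ω : Type*} [MeasurableSpace Ω] (μ : Measure Ω)
    (p : ℝ) (hp : 1 < p) (r : ℝ) (hr : r = min p 2)
    (ξ : ℕ → Ω → ℝ) (hmeas : ∀ n, Measurable (ξ n))
    (hbdd : ∃ b : ℝ, ∀ n : ℕ, 1 ≤ n → tau μ (phi p) (ξ n) ≤ b)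
    (hsubsum : ∀ n : ℕ, 1 ≤ n →
      (subSet μ (phi p) (fun ω => ∑ i ∈ Finset.Icc 1 n, ξ i ω)).Nonempty)
    (hτ : ∀ n : ℕ, 1 ≤ n →
      tau μ (phi p) (fun ω => ∑ i ∈ Finset.Icc 1 n, ξ i ω) ^ r ≤
        ∑ i ∈ Finset.Icc 1 n, tau μ (phi p) (ξ i) ^ r)
    (s : ℝ) (hs0 : 0 < s) (hsr : s < r) :
    ∀ᵐ ω ∂μ, Tendsto (fun n : ℕ => (n : ℝ) ^ (-(1 / s)) * ∑ i ∈ Finset.Icc 1 n, ξ i ω)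
      atTop (nhds 0) := by
  obtain ⟨b, hb⟩ := hbdd
  have hb0 : 0 ≤ b := tau_nonneg.trans (hb 1 le_rfl)
  have hr0 : 0 < r := hr ▸ lt_min (by linarith) two_pos
  have hδ : 0 < 1 / s - 1 / r := sub_pos.2 (one_div_lt_one_div_of_lt hs0 hsr)
  have hτS : ∀ n : ℕ, 1 ≤ n →
      tau μ (phi p) (fun ω => ∑ i ∈ Finset.Icc 1 n, ξ i ω) ≤ b * (n : ℝ) ^ (1 / r) := by
    intro n hn
    simpa using le_mul_card_rpow_inv_of_rpow_le_sum tau_nonneg hb0 hr0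
      (fun i hi => ⟨tau_nonneg, hb i (Finset.mem_Icc.1 hi).1⟩) (hτ n hn)
  refine ae_tendsto_zero_of_tsum_measure_abs_ge_ne_top fun ε hε => ?_
  have hterm : ∀ n : ℕ, μ {ω | ε ≤ |(n : ℝ) ^ (-(1 / s)) * ∑ i ∈ Finset.Icc 1 n, ξ i ω|} ≤
      ENNReal.ofReal (2 * exp (1 / 2) * exp (-(ε / (b + 1)) * (n : ℝ) ^ (1 / s - 1 / r))) := by
    rintro (_ | n)
    · -- `0 ^ (-(1 / s)) = 0`, so the event is empty
      simp [hε.not_ge]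
    · exact measure_rpow_mul_abs_ge_le (by linarith) (Finset.measurable_sum _ fun i _ => hmeas i)
        (hsubsum _ n.succ_pos) (by positivity) hb0 (hτS _ n.succ_pos)
  exact ne_top_of_le_ne_top
    ((summable_exp_neg_mul_rpow (by positivity) hδ).mul_left _).tsum_ofReal_ne_top
    (ENNReal.tsum_le_tsum hterm)

/-- Marcinkiewicz–Zygmund type SLLN: for `p > 1` and `r = min{p,2}`, if `(ξ_n)` is a
bounded sequence of `φ_p`-subgaussian random variables (`sup_n τ_{φ_p}(ξ_n) < ∞`) and
`τ_{φ_p}(∑_{i=1}^n ξ_i)^r ≤ ∑_{i=1}^n τ_{φ_p}(ξ_i)^r` for all `n`, then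
`n^{-1/s} ∑_{i=1}^n ξ_i → 0` almost surely for every `0 < s < r`. -/
theorem marcinkiewicz_zygmund_slln
    {Ω : Type*} [MeasurableSpace Ω] (μ : Measure Ω) [IsProbabilityMeasure μ]
    (p : ℝ) (hp : 1 < p) (r : ℝ) (hr : r = min p 2)
    (ξ : ℕ → Ω → ℝ) (hmeas : ∀ n, Measurable (ξ n))
    (hsub : ∀ n, (subSet μ (phi p) (ξ n)).Nonempty)
    (hbdd : ∃ b : ℝ, ∀ n : ℕ, 1 ≤ n → tau μ (phi p) (ξ n) ≤ b)
    (hsubsum : ∀ n : ℕ, 1 ≤ n →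
      (subSet μ (phi p) (fun ω => ∑ i ∈ Finset.Icc 1 n, ξ i ω)).Nonempty)
    (hτ : ∀ n : ℕ, 1 ≤ n →
      tau μ (phi p) (fun ω => ∑ i ∈ Finset.Icc 1 n, ξ i ω) ^ r ≤
        ∑ i ∈ Finset.Icc 1 n, tau μ (phi p) (ξ i) ^ r)
    (s : ℝ) (hs0 : 0 < s) (hsr : s < r) :
    ∀ᵐ ω ∂μ, Tendsto (fun n : ℕ => (n : ℝ) ^ (-(1 / s)) * ∑ i ∈ Finset.Icc 1 n, ξ i ω)
      atTop (nhds 0) :=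
  marcinkiewicz_zygmund_slln_general μ p hp r hr ξ hmeas hbdd hsubsum hτ s hs0 hsr
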